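/- arXiv:2601.16367 — 2 statements merged into one kernel-verified Lean document; each statement's English description precedes it below -/
import Mathlib

section
/- In a quadratic network game where each player j computes the predicted joint action u^{(j)} = (I-P)^{-1} ε^{(j)} from its own conjectured shock ε^{(j)}, and the realized joint action is u° with (u°)_i = (u^{(i)})_i, the game-to-real gap for player i equals J_i(u°) - J_i(u^{(i)}) = Σ_{j≠i} (ε^{(i)})^T L_{i,-}^T P_{i,j} L_{j,-} (ε^{(i)} - ε^{(j)}), where L = (I-P)^{-1}. -/
open Matrix BigOperators

namespace GameToReal

/-- Total index set: player `i` owns coordinates `Fin (m i)`. -/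
abbrev Idx {ι : Type*} (m : ι → ℕ) := (i : ι) × Fin (m i)

variable {ι : Type*} [Fintype ι] [DecidableEq ι] {m : ι → ℕ}

/-- Cost of player `i` in a quadratic network game:
`J_i(u) = (1/2)‖u_i‖² - u_iᵀ (P_{i,-} u + ε_i)`. -/
noncomputable def J (P : Matrix (Idx m) (Idx m) ℝ) (ε : Idx m → ℝ) (i : ι)
    (u : Idx m → ℝ) : ℝ :=
  (1 / 2) * ∑ k : Fin (m i), (u ⟨i, k⟩) ^ 2
    - ∑ k : Fin (m i), u ⟨i, k⟩ * (P.mulVec u ⟨i, k⟩ + ε ⟨i, k⟩)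

/-- The `i`-th block row `P_{i,-}` of a block matrix. -/
def blockRow (P : Matrix (Idx m) (Idx m) ℝ) (i : ι) : Matrix (Fin (m i)) (Idx m) ℝ :=
  Matrix.of fun k x => P ⟨i, k⟩ x

/-- The `(i,j)` block `P_{i,j}` of a block matrix. -/
def block (P : Matrix (Idx m) (Idx m) ℝ) (i j : ι) : Matrix (Fin (m i)) (Fin (m j)) ℝ :=
  Matrix.of fun k l => P ⟨i, k⟩ ⟨j, l⟩

/-- Euclidean norm of a finitely supported real vector. -/
noncomputable def enorm {a : Type*} [Fintype a] (x : a → ℝ) : ℝ :=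
  Real.sqrt (∑ k, x k ^ 2)

/-- Spectral norm (operator 2-norm) of a real matrix. -/
noncomputable def specNorm {a b : Type*} [Fintype a] [Fintype b] (A : Matrix a b ℝ) : ℝ :=
  sSup {r | ∃ x : b → ℝ, enorm x = 1 ∧ r = enorm (A.mulVec x)}

/-- Smallest singular value `σ_min(A) = min_{‖x‖=1} ‖Ax‖`. -/
noncomputable def sigmaMin {a b : Type*} [Fintype a] [Fintype b] (A : Matrix a b ℝ) : ℝ :=
  sInf {r | ∃ x : b → ℝ, enorm x = 1 ∧ r = enorm (A.mulVec x)}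

/-- with heterogeneous shock conjectures `ε⁽ʲ⁾`, predictions
`u⁽ʲ⁾ = (I-P)⁻¹ ε⁽ʲ⁾`, and realized action `u°ᵢ = u⁽ⁱ⁾ᵢ`, the game-to-real gap of
player `i` equals `∑_{j≠i} ε⁽ⁱ⁾ᵀ L_{i,-}ᵀ P_{i,j} L_{j,-} (ε⁽ⁱ⁾ - ε⁽ʲ⁾)`,
where `L = (I-P)⁻¹`. -/
theorem gap_shock_characterization
    (P : Matrix (Idx m) (Idx m) ℝ)
    (hdiag : ∀ (i : ι) (k l : Fin (m i)), P ⟨i, k⟩ ⟨i, l⟩ = 0)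
    (hP : ((1 : Matrix (Idx m) (Idx m) ℝ) - (P + Pᵀ) / 2).PosDef)
    (ε : ι → Idx m → ℝ)
    (upred : ι → Idx m → ℝ) (hupred : ∀ j, upred j = (1 - P)⁻¹.mulVec (ε j))
    (ureal : Idx m → ℝ) (hureal : ∀ x : Idx m, ureal x = upred x.1 x)
    (i : ι) :
    J P (ε i) i ureal - J P (ε i) i (upred i) =
      ∑ j ∈ Finset.univ.erase i,
        ε i ⬝ᵥ (((blockRow (1 - P)⁻¹ i)ᵀ * block P i j *
          blockRow (1 - P)⁻¹ j).mulVec (ε i - ε j)) := by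
  classical
  set L := (1 - P)⁻¹ with hL
  -- each matrix-form summand equals an explicit double sum
  have key : ∀ j : ι,
      ε i ⬝ᵥ (((blockRow L i)ᵀ * block P i j * blockRow L j).mulVec (ε i - ε j))
      = ∑ k : Fin (m i), ∑ l : Fin (m j),
          upred i ⟨i, k⟩ * P ⟨i, k⟩ ⟨j, l⟩ * (upred i ⟨j, l⟩ - upred j ⟨j, l⟩) := by
    intro j
    have h1 : ((blockRow L i)ᵀ * block P i j * blockRow L j).mulVec (ε i - ε j)
        = (blockRow L i)ᵀ.mulVec ((block P i j).mulVec ((blockRow L j).mulVec (ε i - ε j))) := by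
      rw [mulVec_mulVec, mulVec_mulVec, Matrix.mul_assoc]
    rw [h1, dotProduct_mulVec, vecMul_transpose]
    have h2 : (blockRow L i).mulVec (ε i) = fun k => upred i ⟨i, k⟩ := by
      funext k; simp [blockRow, mulVec, dotProduct, hupred, hL]
    have h3 : (blockRow L j).mulVec (ε i - ε j) = fun l => upred i ⟨j, l⟩ - upred j ⟨j, l⟩ := by
      funext l
      simp only [blockRow, mulVec, dotProduct, hupred, hL, Matrix.of_apply, Pi.sub_apply]
      rw [← Finset.sum_sub_distrib]
      exact Finset.sum_congr rfl fun x _ => by ring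
    rw [h2, h3]
    simp only [dotProduct, mulVec, block, Matrix.of_apply, Finset.mul_sum]
    exact Finset.sum_congr rfl fun k _ => Finset.sum_congr rfl fun l _ => by ring
  -- extend the sum over `univ.erase i` to all of `univ`
  have herase : (∑ j ∈ Finset.univ.erase i,
      ε i ⬝ᵥ (((blockRow L i)ᵀ * block P i j * blockRow L j).mulVec (ε i - ε j)))
      = ∑ j : ι, ∑ k : Fin (m i), ∑ l : Fin (m j),
          upred i ⟨i, k⟩ * P ⟨i, k⟩ ⟨j, l⟩ * (upred i ⟨j, l⟩ - upred j ⟨j, l⟩) := by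
    rw [Finset.sum_congr rfl fun j _ => key j]
    exact Finset.sum_erase _ (by simp)
  rw [herase]
  -- the cancellation in the cost difference
  have hur : ∀ k : Fin (m i), ureal ⟨i, k⟩ = upred i ⟨i, k⟩ := fun k => hureal _
  have hcancel : J P (ε i) i ureal - J P (ε i) i (upred i)
      = ∑ k : Fin (m i), upred i ⟨i, k⟩ *
          (P.mulVec (upred i) ⟨i, k⟩ - P.mulVec ureal ⟨i, k⟩) := by
    simp only [J, hur]
    rw [sub_sub_sub_comm, sub_self, zero_sub, neg_sub, ← Finset.sum_sub_distrib]
    exact Finset.sum_congr rfl fun k _ => by ring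
  have hk : ∀ k : Fin (m i), P.mulVec (upred i) ⟨i, k⟩ - P.mulVec ureal ⟨i, k⟩
      = ∑ j : ι, ∑ l : Fin (m j), P ⟨i, k⟩ ⟨j, l⟩ * (upred i ⟨j, l⟩ - upred j ⟨j, l⟩) := by
    intro k
    simp only [mulVec, dotProduct, ← Finset.sum_sub_distrib, ← mul_sub]
    rw [← Finset.univ_sigma_univ, Finset.sum_sigma]
    exact Finset.sum_congr rfl fun j _ => Finset.sum_congr rfl fun l _ => by
      rw [hureal ⟨j, l⟩]
  rw [hcancel]
  rw [Finset.sum_congr rfl fun k _ => by rw [hk k, Finset.mul_sum]]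
  rw [Finset.sum_comm]
  exact Finset.sum_congr rfl fun j _ => Finset.sum_congr rfl fun k _ => by
    rw [Finset.mul_sum]
    exact Finset.sum_congr rfl fun l _ => by ring

end GameToReal
end

section
/- In a quadratic network game with heterogeneous shock conjectures satisfying ‖ε^{(i)} - ε^{(j)}‖₂ ≤ δ for all i, j, the game-to-real gap for player i is bounded: J_i(u°) - J_i(u^{(i)}) ≤ (δ ‖ε^{(i)}‖₂ Σ_{j≠i} ‖P_{i,j}‖₂) / σ_min(I-P)². -/
/-!
Put `A = I - P`. Positive definiteness of the symmetric part gives `xᵀ A x > 0` for `x ≠ 0`,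
so `A` is invertible and `σ = σ_min(A) > 0` (the minimum of `‖A x‖` over the compact unit
sphere is attained). Hence `‖u⁽ⁱ⁾‖ ≤ ‖ε⁽ⁱ⁾‖ / σ` and `‖u⁽ⁱ⁾ - u⁽ʲ⁾‖ ≤ ‖ε⁽ⁱ⁾ - ε⁽ʲ⁾‖ / σ ≤ δ / σ`.
Since `u°` agrees with `u⁽ⁱ⁾` on player `i`'s block, the quadratic terms of `J_i` cancel and
the gap is `u⁽ⁱ⁾_iᵀ P_{i,-} (u⁽ⁱ⁾ - u°) = ∑_{j ≠ i} u⁽ⁱ⁾_iᵀ P_{i,j} (u⁽ⁱ⁾_j - u⁽ʲ⁾_j)`;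
Cauchy–Schwarz and `‖P_{i,j} v‖ ≤ ‖P_{i,j}‖₂ ‖v‖` bound each term.
-/

open Matrix BigOperators

namespace GameToReal

variable {ι : Type*} [Fintype ι] [DecidableEq ι] {m : ι → ℕ}

section EuclideanNorm

variable {a b : Type*} [Fintype a] [Fintype b]

theorem enorm_eq_norm_toLp (x : a → ℝ) :
    enorm x = ‖(WithLp.toLp 2 x : EuclideanSpace ℝ a)‖ := by
  simp [enorm, EuclideanSpace.norm_eq]

theorem enorm_nonneg (x : a → ℝ) : 0 ≤ enorm x := Real.sqrt_nonneg _

theorem enorm_pos {x : a → ℝ} (hx : x ≠ 0) : 0 < enorm x := by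
  rw [enorm_eq_norm_toLp, norm_pos_iff]
  exact fun h => hx (congrArg WithLp.ofLp h)

theorem enorm_zero : enorm (0 : a → ℝ) = 0 := by simp [enorm]

theorem enorm_smul (c : ℝ) (x : a → ℝ) : enorm (c • x) = |c| * enorm x := by
  rw [enorm_eq_norm_toLp, enorm_eq_norm_toLp, WithLp.toLp_smul, norm_smul, Real.norm_eq_abs]

theorem dotProduct_le_enorm_mul_enorm (x y : a → ℝ) : x ⬝ᵥ y ≤ enorm x * enorm y :=
  Real.sum_mul_le_sqrt_mul_sqrt _ _ _

theorem isCompact_setOf_enorm_eq_one : IsCompact {x : a → ℝ | enorm x = 1} := by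
  have h : {x : a → ℝ | enorm x = 1} =
      (PiLp.homeomorph 2 fun _ : a => ℝ).symm ⁻¹' Metric.sphere 0 1 := by
    ext x
    rw [Set.mem_ofPred_eq, enorm_eq_norm_toLp]
    exact mem_sphere_zero_iff_norm.symm
  rw [h, Homeomorph.isCompact_preimage]
  exact isCompact_sphere 0 1

/-- `specNorm A` and `sigmaMin A` are the supremum and infimum of this set. -/
def gains (A : Matrix a b ℝ) : Set ℝ := {r | ∃ x : b → ℝ, enorm x = 1 ∧ r = enorm (A *ᵥ x)}

theorem isCompact_gains (A : Matrix a b ℝ) : IsCompact (gains A) := by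
  have h : gains A = (fun x => enorm (A *ᵥ x)) '' {x | enorm x = 1} := by
    ext r
    simp [gains, eq_comm]
  rw [h]
  exact isCompact_setOf_enorm_eq_one.image (by unfold enorm; fun_prop)

theorem enorm_mulVec_div_mem_gains (A : Matrix a b ℝ) {x : b → ℝ} (hx : x ≠ 0) :
    enorm (A *ᵥ x) / enorm x ∈ gains A := by
  have hpos := enorm_pos hx
  refine ⟨(enorm x)⁻¹ • x, ?_, ?_⟩
  · rw [enorm_smul, abs_of_pos (inv_pos.2 hpos), inv_mul_cancel₀ hpos.ne']
  · rw [mulVec_smul, enorm_smul, abs_of_pos (inv_pos.2 hpos), div_eq_inv_mul]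

theorem specNorm_nonneg (A : Matrix a b ℝ) : 0 ≤ specNorm A :=
  Real.sSup_nonneg (by rintro r ⟨x, -, rfl⟩; exact enorm_nonneg _)

theorem sigmaMin_nonneg (A : Matrix a b ℝ) : 0 ≤ sigmaMin A :=
  Real.sInf_nonneg (by rintro r ⟨x, -, rfl⟩; exact enorm_nonneg _)

theorem enorm_mulVec_le (A : Matrix a b ℝ) (x : b → ℝ) :
    enorm (A *ᵥ x) ≤ specNorm A * enorm x := by
  rcases eq_or_ne x 0 with rfl | hx
  · simp [enorm_zero]
  · rw [← div_le_iff₀ (enorm_pos hx)]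
    exact le_csSup (isCompact_gains A).bddAbove (enorm_mulVec_div_mem_gains A hx)

theorem sigmaMin_mul_le (A : Matrix a b ℝ) (x : b → ℝ) :
    sigmaMin A * enorm x ≤ enorm (A *ᵥ x) := by
  rcases eq_or_ne x 0 with rfl | hx
  · simp [enorm_zero]
  · rw [← le_div_iff₀ (enorm_pos hx)]
    exact csInf_le (isCompact_gains A).bddBelow (enorm_mulVec_div_mem_gains A hx)

theorem dotProduct_mulVec_le_of_enorm_le (B : Matrix a b ℝ) {y : a → ℝ} {v : b → ℝ} {α β : ℝ}
    (hy : enorm y ≤ α) (hv : enorm v ≤ β) : y ⬝ᵥ B *ᵥ v ≤ α * (specNorm B * β) :=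
  (dotProduct_le_enorm_mul_enorm y _).trans <| mul_le_mul hy
    ((enorm_mulVec_le B v).trans (mul_le_mul_of_nonneg_left hv (specNorm_nonneg B)))
    (enorm_nonneg _) ((enorm_nonneg y).trans hy)

end EuclideanNorm

section Coercive

variable {a : Type*} [Fintype a] {A : Matrix a a ℝ}

theorem sigmaMin_pos [Nonempty a] (hA : ∀ x, x ≠ 0 → 0 < x ⬝ᵥ A *ᵥ x) : 0 < sigmaMin A := by
  obtain ⟨x, hx⟩ := exists_ne (0 : a → ℝ)
  obtain ⟨y, hy, hmin⟩ := (isCompact_gains A).sInf_mem ⟨_, enorm_mulVec_div_mem_gains A hx⟩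
  have hy0 : y ≠ 0 := by
    rintro rfl
    simp [enorm_zero] at hy
  have hAy : A *ᵥ y ≠ 0 := fun h => by simpa [h] using hA y hy0
  rw [sigmaMin, ← gains, hmin]
  exact enorm_pos hAy

theorem enorm_le_div_sigmaMin (hA : ∀ x, x ≠ 0 → 0 < x ⬝ᵥ A *ᵥ x) (x : a → ℝ) :
    enorm x ≤ enorm (A *ᵥ x) / sigmaMin A := by
  rcases eq_or_ne x 0 with rfl | hx
  · simp [enorm_zero]
  · obtain ⟨k, -⟩ := Function.ne_iff.mp hx
    have : Nonempty a := ⟨k⟩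
    rw [le_div_iff₀ (sigmaMin_pos hA), mul_comm]
    exact sigmaMin_mul_le A x

theorem isUnit_det_of_dotProduct_mulVec_pos [DecidableEq a]
    (hA : ∀ x, x ≠ 0 → 0 < x ⬝ᵥ A *ᵥ x) : IsUnit A.det := by
  rw [isUnit_iff_ne_zero, Ne, ← exists_mulVec_eq_zero_iff]
  rintro ⟨v, hv, hAv⟩
  simpa [hAv] using hA v hv

theorem dotProduct_half_add_transpose_mulVec [DecidableEq a] (P : Matrix a a ℝ) (x : a → ℝ) :
    x ⬝ᵥ ((P + Pᵀ) / 2) *ᵥ x = x ⬝ᵥ P *ᵥ x := by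
  have h2 : (2 : Matrix a a ℝ)⁻¹ = (2 : ℝ)⁻¹ • 1 := by
    refine inv_eq_left_inv ?_
    ext i j
    simp [ofNat_apply, one_apply]
  have ht : x ⬝ᵥ Pᵀ *ᵥ x = x ⬝ᵥ P *ᵥ x := by
    rw [mulVec_transpose, dotProduct_mulVec, dotProduct_comm]
  rw [div_eq_mul_inv, h2, Matrix.mul_smul, mul_one, smul_mulVec, dotProduct_smul, add_mulVec,
    dotProduct_add, ht, smul_eq_mul]
  ring

theorem dotProduct_one_sub_mulVec_pos [DecidableEq a] {P : Matrix a a ℝ}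
    (hP : (1 - (P + Pᵀ) / 2).PosDef) {x : a → ℝ} (hx : x ≠ 0) :
    0 < x ⬝ᵥ (1 - P) *ᵥ x := by
  have h := hP.dotProduct_mulVec_pos hx
  rwa [star_trivial, sub_mulVec, dotProduct_sub, dotProduct_half_add_transpose_mulVec,
    ← dotProduct_sub, ← sub_mulVec] at h

end Coercive

section Blocks

def vecBlock {ι : Type*} {m : ι → ℕ} (z : Idx m → ℝ) (j : ι) : Fin (m j) → ℝ :=
  fun l => z ⟨j, l⟩

theorem vecBlock_sub {ι : Type*} {m : ι → ℕ} (u w : Idx m → ℝ) (j : ι) :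
    vecBlock (u - w) j = vecBlock u j - vecBlock w j :=
  rfl

theorem enorm_vecBlock_le {ι : Type*} [Fintype ι] {m : ι → ℕ} (z : Idx m → ℝ) (j : ι) :
    enorm (vecBlock z j) ≤ enorm z := by
  refine Real.sqrt_le_sqrt ?_
  rw [Fintype.sum_sigma]
  exact Finset.single_le_sum (f := fun j => ∑ l, z ⟨j, l⟩ ^ 2)
    (fun _ _ => Finset.sum_nonneg fun _ _ => sq_nonneg _) (Finset.mem_univ j)

theorem blockRow_mulVec_apply {ι : Type*} {m : ι → ℕ} [Fintype (Idx m)]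
    (P : Matrix (Idx m) (Idx m) ℝ) (i : ι) (z : Idx m → ℝ) (k : Fin (m i)) :
    (blockRow P i *ᵥ z) k = (P *ᵥ z) ⟨i, k⟩ :=
  rfl

theorem blockRow_mulVec {ι : Type*} [Fintype ι] {m : ι → ℕ} (P : Matrix (Idx m) (Idx m) ℝ)
    (i : ι) (z : Idx m → ℝ) : blockRow P i *ᵥ z = ∑ j, block P i j *ᵥ vecBlock z j := by
  ext k
  simp [mulVec, dotProduct, Fintype.sum_sigma, blockRow, block, vecBlock]

theorem blockRow_mulVec_of_vecBlock_eq_zero (P : Matrix (Idx m) (Idx m) ℝ) (i : ι)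
    {z : Idx m → ℝ} (hz : vecBlock z i = 0) :
    blockRow P i *ᵥ z = ∑ j ∈ Finset.univ.erase i, block P i j *ᵥ vecBlock z j := by
  rw [blockRow_mulVec, Finset.sum_erase _ (by rw [hz, mulVec_zero])]

theorem J_sub_J_of_vecBlock_eq {ι : Type*} [Fintype ι] {m : ι → ℕ}
    (P : Matrix (Idx m) (Idx m) ℝ) (ε : Idx m → ℝ) (i : ι) {u w : Idx m → ℝ}
    (h : vecBlock w i = vecBlock u i) :
    J P ε i w - J P ε i u = vecBlock u i ⬝ᵥ blockRow P i *ᵥ (u - w) := by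
  have hw : ∀ k, w ⟨i, k⟩ = u ⟨i, k⟩ := congrFun h
  simp only [J, hw, dotProduct, vecBlock, blockRow_mulVec_apply, mulVec_sub, Pi.sub_apply,
    mul_sub, mul_add, Finset.sum_sub_distrib, Finset.sum_add_distrib]
  ring

end Blocks

theorem gap_shock_bound_general
    (P : Matrix (Idx m) (Idx m) ℝ)
    (hP : ((1 : Matrix (Idx m) (Idx m) ℝ) - (P + Pᵀ) / 2).PosDef)
    (δ : ℝ) (ε : ι → Idx m → ℝ)
    (hδ : ∀ i j : ι, enorm (ε i - ε j) ≤ δ)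
    (upred : ι → Idx m → ℝ) (hupred : ∀ j, upred j = (1 - P)⁻¹.mulVec (ε j))
    (ureal : Idx m → ℝ) (hureal : ∀ x : Idx m, ureal x = upred x.1 x)
    (i : ι) :
    J P (ε i) i ureal - J P (ε i) i (upred i) ≤
      (δ * enorm (ε i) * ∑ j ∈ Finset.univ.erase i, specNorm (block P i j)) /
        (sigmaMin ((1 : Matrix (Idx m) (Idx m) ℝ) - P)) ^ 2 := by
  set σ := sigmaMin ((1 : Matrix (Idx m) (Idx m) ℝ) - P)
  have hA : ∀ x, x ≠ 0 → 0 < x ⬝ᵥ (1 - P) *ᵥ x := fun x => dotProduct_one_sub_mulVec_pos hP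
  have hsolve : ∀ j, (1 - P) *ᵥ upred j = ε j := fun j => by
    rw [hupred, mulVec_mulVec, mul_nonsing_inv _ (isUnit_det_of_dotProduct_mulVec_pos hA),
      one_mulVec]
  have hblock : ∀ z j, enorm (vecBlock z j) ≤ enorm ((1 - P) *ᵥ z) / σ := fun z j =>
    (enorm_vecBlock_le z j).trans (enorm_le_div_sigmaMin hA z)
  have hown : enorm (vecBlock (upred i) i) ≤ enorm (ε i) / σ := hsolve i ▸ hblock (upred i) i
  have hdev : ∀ j, enorm (vecBlock (upred i - ureal) j) ≤ δ / σ := fun j => by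
    have hreal : vecBlock ureal j = vecBlock (upred j) j := funext fun l => hureal ⟨j, l⟩
    rw [vecBlock_sub, hreal, ← vecBlock_sub]
    refine (hblock _ j).trans ?_
    rw [mulVec_sub, hsolve, hsolve]
    exact div_le_div_of_nonneg_right (hδ i j) (sigmaMin_nonneg _)
  have hreal : vecBlock ureal i = vecBlock (upred i) i := funext fun k => hureal ⟨i, k⟩
  have hself : vecBlock (upred i - ureal) i = 0 := by rw [vecBlock_sub, hreal, sub_self]
  rw [J_sub_J_of_vecBlock_eq P (ε i) i hreal, blockRow_mulVec_of_vecBlock_eq_zero P i hself,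
    dotProduct_sum, Finset.mul_sum, Finset.sum_div]
  exact Finset.sum_le_sum fun j _ =>
    (dotProduct_mulVec_le_of_enorm_le _ hown (hdev j)).trans_eq (by ring)

/-- with heterogeneous shock conjectures satisfying
`‖ε⁽ⁱ⁾ - ε⁽ʲ⁾‖₂ ≤ δ` for all `i,j`, the game-to-real gap of player `i` is at most
`δ ‖ε⁽ⁱ⁾‖₂ (∑_{j≠i} ‖P_{i,j}‖₂) / σ_min(I-P)²`. -/
theorem gap_shock_bound
    (P : Matrix (Idx m) (Idx m) ℝ)
    (hdiag : ∀ (i : ι) (k l : Fin (m i)), P ⟨i, k⟩ ⟨i, l⟩ = 0)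
    (hP : ((1 : Matrix (Idx m) (Idx m) ℝ) - (P + Pᵀ) / 2).PosDef)
    (δ : ℝ) (ε : ι → Idx m → ℝ)
    (hδ : ∀ i j : ι, enorm (ε i - ε j) ≤ δ)
    (upred : ι → Idx m → ℝ) (hupred : ∀ j, upred j = (1 - P)⁻¹.mulVec (ε j))
    (ureal : Idx m → ℝ) (hureal : ∀ x : Idx m, ureal x = upred x.1 x)
    (i : ι) :
    J P (ε i) i ureal - J P (ε i) i (upred i) ≤
      (δ * enorm (ε i) * ∑ j ∈ Finset.univ.erase i, specNorm (block P i j)) /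
        (sigmaMin ((1 : Matrix (Idx m) (Idx m) ℝ) - P)) ^ 2 :=
  gap_shock_bound_general P hP δ ε hδ upred hupred ureal hureal i

end GameToReal
end
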